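/- arXiv:2402.13344 — 2 statements merged into one kernel-verified Lean document; each statement's English description precedes it below -/
import Mathlib

section
/- Suppose M₀, M₁, M₂ are structures in the same vocabulary with pairwise disjoint universes, and Eve has winning strategies in DG^β_{θ,α}(M₀,M₁) and in DG^β_{θ,α'}(M₁,M₂). Then Eve has a winning strategy in DG^β_{θ,α⊕α'}(M₀,M₂), where ⊕ denotes the natural (Hessenberg) sum of ordinals. -/
/-!
Eve plays her two winning strategies side by side, with the same clock, and answers with the
composite `g₁ ○ g₂`. When Adam asks for `B₀ ⊆ M₀` and `B₂ ⊆ M₂`, she first asks the first game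
for `B₀` together with the current `M₁`-side of the second game, and then the second game for
the new `M₁`-side of the first game together with `B₂`; so the `M₁`-side of the first game
always lies inside the `M₁`-side of the second. An element of `M₀` (of `M₂`) gets the natural
sum of its own height and of the height of its partner in `M₁`, or of `α'` (of `α`) when the
partner is missing. In each round one summand drops strictly and the other does not grow, so
strict monotonicity of `♯` in each argument makes the composite heights legal. When `α = 0`,
Eve can only win the first game with a clock `β > 0` if `M₁` has no nonempty subset of size
`≤ θ`; this is what makes every element of `M₂` of composite height `0` matched.
-/

open Cardinal Set FirstOrder FirstOrder.Language

universe u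

namespace DGPaper

variable (L : FirstOrder.Language.{u, u})

/-- A partial isomorphism between two `L`-structures, given as the graph of a partial map.
It is functional, injective, preserves all relations (of positive arity) in both directions,
and is compatible with the interpretations of all function symbols (including constants). -/
def IsPartialIso (M N : Type u) [L.Structure M] [L.Structure N] (g : Set (M × N)) : Prop :=
  (∀ ⦃a : M⦄ ⦃b b' : N⦄, (a, b) ∈ g → (a, b') ∈ g → b = b') ∧
  (∀ ⦃a a' : M⦄ ⦃b : N⦄, (a, b) ∈ g → (a', b) ∈ g → a = a') ∧
  (∀ (n : ℕ) (R : L.Relations (n + 1)) (x : Fin (n + 1) → M) (y : Fin (n + 1) → N),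
      (∀ i, (x i, y i) ∈ g) →
        (Structure.RelMap R x ↔ Structure.RelMap R y)) ∧
  (∀ (n : ℕ) (f : L.Functions n) (x : Fin n → M) (y : Fin n → N),
      (∀ i, (x i, y i) ∈ g) →
        (∀ b : N, (Structure.funMap f x, b) ∈ g → b = Structure.funMap f y) ∧
        (∀ a : M, (a, Structure.funMap f y) ∈ g → a = Structure.funMap f x))

/-- A `(θ, α)`-position in the similarity game on `(M, N)`:  a clock ordinal `ht`, sets
`A0 ⊆ M`, `A1 ⊆ N` of cardinality `≤ θ`, a partial isomorphism `g` between them, and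
height functions `h0`, `h1` taking values `< α` on `A0`, `A1`, such that every element of
height `0` is matched by `g`. -/
structure Position (M N : Type u) [L.Structure M] [L.Structure N]
    (θ : Cardinal.{u}) (α : Ordinal.{u}) : Type (u + 1) where
  ht : Ordinal.{u}
  A0 : Set M
  A1 : Set N
  A0_card : #A0 ≤ θ
  A1_card : #A1 ≤ θ
  g : Set (M × N)
  g_iso : IsPartialIso L M N g
  g_sub : g ⊆ A0 ×ˢ A1
  h0 : M → Ordinal.{u}
  h1 : N → Ordinal.{u}
  h0_lt : ∀ a ∈ A0, h0 a < α
  h1_lt : ∀ b ∈ A1, h1 b < α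
  h0_zero : ∀ a ∈ A0, h0 a = 0 → ∃ b, (a, b) ∈ g
  h1_zero : ∀ b ∈ A1, h1 b = 0 → ∃ a, (a, b) ∈ g

variable {M N : Type u} [L.Structure M] [L.Structure N] {θ : Cardinal.{u}} {α : Ordinal.{u}}

/-- `q` extends `p` (written `q < p` in the paper): the clock strictly decreases, the sets
grow, the partial isomorphism of `q` restricted to the old sets is that of `p`, and every
height strictly decreases unless it is already `0`. -/
def Extends (q p : Position L M N θ α) : Prop :=
  q.ht < p.ht ∧ p.A0 ⊆ q.A0 ∧ p.A1 ⊆ q.A1 ∧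
  p.g ⊆ q.g ∧ (∀ a b, (a, b) ∈ q.g → a ∈ p.A0 → (a, b) ∈ p.g) ∧
  (∀ a ∈ p.A0, q.h0 a ≤ p.h0 a ∧ (p.h0 a ≠ 0 → q.h0 a < p.h0 a)) ∧
  (∀ b ∈ p.A1, q.h1 b ≤ p.h1 b ∧ (p.h1 b ≠ 0 → q.h1 b < p.h1 b))

/-- The starting position `(β, ∅, ∅, ∅, ∅)`. -/
def startPos (β : Ordinal.{u}) : Position L M N θ α where
  ht := β
  A0 := ∅
  A1 := ∅
  A0_card := by simp
  A1_card := by simp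
  g := ∅
  g_iso := by
    refine ⟨?_, ?_, ?_, ?_⟩ <;> intros <;> simp_all
  g_sub := by simp
  h0 := fun _ => 0
  h1 := fun _ => 0
  h0_lt := by simp
  h1_lt := by simp
  h0_zero := by simp
  h1_zero := by simp

/-- Eve has a winning strategy in the similarity game from position `p`:  whatever clock
ordinal `β' < ht p` and sets `B0`, `B1` of size `≤ θ` Adam demands, Eve can move to an
extending position covering them from which she again has a winning strategy.  (Since the
clock strictly decreases, the game is finite, and this well-founded recursion captures
exactly the existence of a winning strategy for Eve.) -/
noncomputable def EveWinsFrom (θ : Cardinal.{u}) (α : Ordinal.{u})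
    (p : Position L M N θ α) : Prop :=
  WellFounded.fix (C := fun _ : Ordinal.{u} => Position L M N θ α → Prop) Ordinal.lt_wf
    (fun o IH p =>
      ∀ β' (hβ : β' < o) (B0 : Set M) (B1 : Set N), #B0 ≤ θ → #B1 ≤ θ →
        ∃ q : Position L M N θ α, Extends L q p ∧ q.ht = β' ∧
          B0 ⊆ q.A0 ∧ B1 ⊆ q.A1 ∧ IH β' hβ q)
    p.ht p

/-- Eve has a winning strategy in the game `DG^β_{θ,α}(M, N)`. -/
noncomputable def EveWinsGame (M N : Type u) [L.Structure M] [L.Structure N]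
    (β : Ordinal.{u}) (θ : Cardinal.{u}) (α : Ordinal.{u}) : Prop :=
  EveWinsFrom L θ α (startPos L (M := M) (N := N) β)

/-- Adam has a winning strategy from position `p`: he can demand a clock ordinal
`β' < ht p` and sets `B0`, `B1` of size `≤ θ` such that every legal reply of Eve leads to
a position from which Adam again has a winning strategy (in particular, if Eve has no
legal reply, she loses). -/
inductive AdamWinsFrom (θ : Cardinal.{u}) (α : Ordinal.{u}) :
    Position L M N θ α → Prop where
  | step (p : Position L M N θ α) (β' : Ordinal.{u}) (hβ : β' < p.ht)
      (B0 : Set M) (B1 : Set N) (hB0 : #B0 ≤ θ) (hB1 : #B1 ≤ θ)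
      (h : ∀ q : Position L M N θ α, Extends L q p → q.ht = β' →
        B0 ⊆ q.A0 → B1 ⊆ q.A1 → AdamWinsFrom θ α q) :
      AdamWinsFrom θ α p

/-- Adam has a winning strategy in the game `DG^β_{θ,α}(M, N)`. -/
def AdamWinsGame (M N : Type u) [L.Structure M] [L.Structure N]
    (β : Ordinal.{u}) (θ : Cardinal.{u}) (α : Ordinal.{u}) : Prop :=
  AdamWinsFrom L θ α (startPos L (M := M) (N := N) β)

/-- A position of the infinite game `DG_{θ,α}(M,N)` (no clock ordinal). -/
structure IPosition (M N : Type u) [L.Structure M] [L.Structure N]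
    (θ : Cardinal.{u}) (α : Ordinal.{u}) : Type (u + 1) where
  A0 : Set M
  A1 : Set N
  A0_card : #A0 ≤ θ
  A1_card : #A1 ≤ θ
  g : Set (M × N)
  g_iso : IsPartialIso L M N g
  g_sub : g ⊆ A0 ×ˢ A1
  h0 : M → Ordinal.{u}
  h1 : N → Ordinal.{u}
  h0_lt : ∀ a ∈ A0, h0 a < α
  h1_lt : ∀ b ∈ A1, h1 b < α
  h0_zero : ∀ a ∈ A0, h0 a = 0 → ∃ b, (a, b) ∈ g
  h1_zero : ∀ b ∈ A1, h1 b = 0 → ∃ a, (a, b) ∈ g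

/-- Extension of positions in the infinite game. -/
def IExtends (q p : IPosition L M N θ α) : Prop :=
  p.A0 ⊆ q.A0 ∧ p.A1 ⊆ q.A1 ∧
  p.g ⊆ q.g ∧ (∀ a b, (a, b) ∈ q.g → a ∈ p.A0 → (a, b) ∈ p.g) ∧
  (∀ a ∈ p.A0, q.h0 a ≤ p.h0 a ∧ (p.h0 a ≠ 0 → q.h0 a < p.h0 a)) ∧
  (∀ b ∈ p.A1, q.h1 b ≤ p.h1 b ∧ (p.h1 b ≠ 0 → q.h1 b < p.h1 b))

/-- The empty starting position of the infinite game. -/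
def startIPos : IPosition L M N θ α where
  A0 := ∅
  A1 := ∅
  A0_card := by simp
  A1_card := by simp
  g := ∅
  g_iso := by
    refine ⟨?_, ?_, ?_, ?_⟩ <;> intros <;> simp_all
  g_sub := by simp
  h0 := fun _ => 0
  h1 := fun _ => 0
  h0_lt := by simp
  h1_lt := by simp
  h0_zero := by simp
  h1_zero := by simp

/-- Eve has a winning strategy in the infinite game `DG_{θ,α}(M, N)` of length `ω`.
Since this game is closed for Eve, having a winning strategy is equivalent to having a
positional one, i.e. a set `K` of positions containing the starting position such that Eve
can answer any challenge of Adam while staying inside `K`. -/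
def EveWinsInfGame (M N : Type u) [L.Structure M] [L.Structure N]
    (θ : Cardinal.{u}) (α : Ordinal.{u}) : Prop :=
  ∃ K : Set (IPosition L M N θ α), startIPos L ∈ K ∧
    ∀ p ∈ K, ∀ (B0 : Set M) (B1 : Set N), #B0 ≤ θ → #B1 ≤ θ →
      ∃ q ∈ K, IExtends L q p ∧ B0 ⊆ q.A0 ∧ B1 ⊆ q.A1

end DGPaper

/-- The natural (Hessenberg) sum of ordinals, as `Ordinal.nadd` was defined in Mathlib
(removed from the current Mathlib). -/
noncomputable def Ordinal.nadd : Ordinal.{u} → Ordinal.{u} → Ordinal.{u}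
  | a, b =>
    max (⨆ x : Iio a, Order.succ (Ordinal.nadd x.1 b))
      (⨆ x : Iio b, Order.succ (Ordinal.nadd a x.1))
termination_by a b => (a, b)
decreasing_by all_goals cases x; decreasing_tactic

infixl:65 " ♯ " => Ordinal.nadd

namespace Ordinal

variable {a b c d : Ordinal.{u}}

theorem nadd_def (a b : Ordinal.{u}) : a ♯ b =
    max (⨆ x : Iio a, Order.succ (x.1 ♯ b)) (⨆ x : Iio b, Order.succ (a ♯ x.1)) := by
  rw [Ordinal.nadd]

theorem nadd_lt_nadd_left (h : b < c) (a : Ordinal.{u}) : a ♯ b < a ♯ c := by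
  rw [nadd_def a c]
  refine (Order.lt_succ (a ♯ b)).trans_le (le_max_of_le_right ?_)
  exact le_ciSup (f := fun x : Iio c => Order.succ (a ♯ x.1)) bddAbove_of_small ⟨b, h⟩

theorem nadd_lt_nadd_right (h : a < b) (c : Ordinal.{u}) : a ♯ c < b ♯ c := by
  rw [nadd_def b c]
  refine (Order.lt_succ (a ♯ c)).trans_le (le_max_of_le_left ?_)
  exact le_ciSup (f := fun x : Iio b => Order.succ (x.1 ♯ c)) bddAbove_of_small ⟨a, h⟩

theorem nadd_le_nadd_left (h : b ≤ c) (a : Ordinal.{u}) : a ♯ b ≤ a ♯ c :=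
  StrictMono.monotone (fun _ _ h => nadd_lt_nadd_left h a) h

theorem nadd_le_nadd_right (h : a ≤ b) (c : Ordinal.{u}) : a ♯ c ≤ b ♯ c :=
  StrictMono.monotone (fun _ _ h => nadd_lt_nadd_right h c) h

theorem nadd_le_nadd (h₁ : a ≤ b) (h₂ : c ≤ d) : a ♯ c ≤ b ♯ d :=
  (nadd_le_nadd_right h₁ c).trans (nadd_le_nadd_left h₂ b)

theorem nadd_lt_nadd_of_lt_of_le (h₁ : a < b) (h₂ : c ≤ d) : a ♯ c < b ♯ d :=
  (nadd_lt_nadd_right h₁ c).trans_le (nadd_le_nadd_left h₂ b)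

theorem nadd_lt_nadd_of_le_of_lt (h₁ : a ≤ b) (h₂ : c < d) : a ♯ c < b ♯ d :=
  (nadd_le_nadd_right h₁ c).trans_lt (nadd_lt_nadd_left h₂ b)

theorem le_self_nadd (a b : Ordinal.{u}) : a ≤ a ♯ b := by
  induction a using WellFoundedLT.induction with
  | _ a IH => exact le_of_forall_lt fun x hx => (IH x hx).trans_lt (nadd_lt_nadd_right hx b)

theorem le_nadd_self (a b : Ordinal.{u}) : b ≤ a ♯ b := by
  induction b using WellFoundedLT.induction with
  | _ b IH => exact le_of_forall_lt fun x hx => (IH x hx).trans_lt (nadd_lt_nadd_left hx a)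

theorem nadd_eq_zero_iff : a ♯ b = 0 ↔ a = 0 ∧ b = 0 := by
  refine ⟨fun h => ⟨nonpos_iff_eq_zero.1 (h ▸ le_self_nadd a b),
    nonpos_iff_eq_zero.1 (h ▸ le_nadd_self a b)⟩, ?_⟩
  rintro ⟨rfl, rfl⟩
  simp [nadd_def 0 0]

end Ordinal

namespace DGPaper

open SetRel

section Heights

variable {X Y : Type*}

/-- The condition on heights in `Extends`. -/
def Descends (x' x : Ordinal.{u}) : Prop :=
  x' ≤ x ∧ (x ≠ 0 → x' < x)

theorem Descends.of_lt {x' x : Ordinal.{u}} (h : x' < x) : Descends x' x :=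
  ⟨h.le, fun _ => h⟩

theorem Descends.nadd {x x' y y' : Ordinal.{u}} (hx : Descends x' x) (hy : Descends y' y) :
    Descends (x' ♯ y') (x ♯ y) := by
  refine ⟨Ordinal.nadd_le_nadd hx.1 hy.1, fun hxy => ?_⟩
  by_cases hx0 : x = 0
  · have hy0 : y ≠ 0 := fun hy0 => hxy (Ordinal.nadd_eq_zero_iff.2 ⟨hx0, hy0⟩)
    exact Ordinal.nadd_lt_nadd_of_le_of_lt hx.1 (hy.2 hy0)
  · exact Ordinal.nadd_lt_nadd_of_lt_of_le (hx.2 hx0) hy.1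

open scoped Classical in
noncomputable def partnerHeight (R : SetRel X Y) (s : Set Y) (h : Y → Ordinal.{u})
    (d : Ordinal.{u}) (x : X) : Ordinal.{u} :=
  if hx : ∃ y ∈ s, (x, y) ∈ R then h hx.choose else d

variable {R : SetRel X Y} {s : Set Y} {h : Y → Ordinal.{u}} {d : Ordinal.{u}} {x : X} {y : Y}

theorem partnerHeight_eq (hR : ∀ ⦃x y y'⦄, (x, y) ∈ R → (x, y') ∈ R → y = y') (hy : y ∈ s)
    (hxy : (x, y) ∈ R) : partnerHeight R s h d x = h y := by
  have hx : ∃ y ∈ s, (x, y) ∈ R := ⟨y, hy, hxy⟩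
  rw [partnerHeight, dif_pos hx, hR hxy hx.choose_spec.2]

theorem partnerHeight_eq_default (hx : ¬∃ y ∈ s, (x, y) ∈ R) : partnerHeight R s h d x = d :=
  dif_neg hx

theorem partnerHeight_le (hs : ∀ y ∈ s, h y < d) : partnerHeight R s h d x ≤ d := by
  unfold partnerHeight
  split_ifs with hx
  exacts [(hs _ hx.choose_spec.1).le, le_rfl]

theorem exists_of_partnerHeight_eq_zero (hx : partnerHeight R s h d x = 0) (hd : d ≠ 0) :
    ∃ y ∈ s, (x, y) ∈ R ∧ h y = 0 := by
  unfold partnerHeight at hx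
  split_ifs at hx with hx'
  exacts [⟨_, hx'.choose_spec.1, hx'.choose_spec.2, hx⟩, absurd hx hd]

end Heights

variable {L : FirstOrder.Language.{u, u}}

theorem IsPartialIso.comp {M₀ M₁ M₂ : Type u} [L.Structure M₀] [L.Structure M₁] [L.Structure M₂]
    {g₁ : SetRel M₀ M₁} {g₂ : SetRel M₁ M₂}
    (h₁ : IsPartialIso L M₀ M₁ g₁) (h₂ : IsPartialIso L M₁ M₂ g₂) :
    IsPartialIso L M₀ M₂ (g₁ ○ g₂) := by
  obtain ⟨fun₁, inj₁, rel₁, map₁⟩ := h₁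
  obtain ⟨fun₂, inj₂, rel₂, map₂⟩ := h₂
  have middle : ∀ {n} {x : Fin n → M₀} {z : Fin n → M₂}, (∀ i, (x i, z i) ∈ g₁ ○ g₂) →
      ∃ y : Fin n → M₁, (∀ i, (x i, y i) ∈ g₁) ∧ ∀ i, (y i, z i) ∈ g₂ := fun hxz =>
    ⟨fun i => (hxz i).choose, fun i => (hxz i).choose_spec.1, fun i => (hxz i).choose_spec.2⟩
  refine ⟨?_, ?_, fun n R x z hxz => ?_, fun n f x z hxz => ?_⟩
  · rintro a c c' ⟨b, hab, hbc⟩ ⟨b', hab', hbc'⟩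
    exact fun₂ (fun₁ hab hab' ▸ hbc) hbc'
  · rintro a a' c ⟨b, hab, hbc⟩ ⟨b', hab', hbc'⟩
    exact inj₁ hab (inj₂ hbc hbc' ▸ hab')
  · obtain ⟨y, hxy, hyz⟩ := middle hxz
    exact (rel₁ n R x y hxy).trans (rel₂ n R y z hyz)
  · obtain ⟨y, hxy, hyz⟩ := middle hxz
    refine ⟨?_, ?_⟩
    · rintro c ⟨b, hab, hbc⟩
      exact (map₂ n f y z hyz).1 c ((map₁ n f x y hxy).1 b hab ▸ hbc)
    · rintro a ⟨b, hab, hbc⟩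
      exact (map₁ n f x y hxy).2 a ((map₂ n f y z hyz).2 b hbc ▸ hab)

section Game

variable {M N : Type u} [L.Structure M] [L.Structure N] {θ : Cardinal.{u}} {α : Ordinal.{u}}

theorem eveWinsFrom_iff (p : Position L M N θ α) :
    EveWinsFrom L θ α p ↔
      ∀ β' < p.ht, ∀ (B0 : Set M) (B1 : Set N), #B0 ≤ θ → #B1 ≤ θ →
        ∃ q : Position L M N θ α, Extends L q p ∧ q.ht = β' ∧
          B0 ⊆ q.A0 ∧ B1 ⊆ q.A1 ∧ EveWinsFrom L θ α q := by
  unfold EveWinsFrom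
  rw [WellFounded.fix_eq]
  refine forall₂_congr fun β' _ => forall₄_congr fun B0 B1 _ _ => exists_congr fun q => ?_
  refine and_congr_right fun _ => and_congr_right fun hq => ?_
  dsimp only
  rw [hq]

theorem eveWinsFrom_of_ht_eq_zero {p : Position L M N θ α} (hp : p.ht = 0) :
    EveWinsFrom L θ α p :=
  (eveWinsFrom_iff p).2 fun _ hβ' => absurd (hp ▸ hβ') not_lt_zero

theorem eveWinsFrom_congr {p p' : Position L M N θ α} (hp : EveWinsFrom L θ α p)
    (hht : p'.ht = p.ht) (hA0 : p'.A0 = p.A0) (hA1 : p'.A1 = p.A1) (hg : p'.g = p.g)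
    (hh0 : ∀ a ∈ p.A0, p'.h0 a = p.h0 a) (hh1 : ∀ b ∈ p.A1, p'.h1 b = p.h1 b) :
    EveWinsFrom L θ α p' := by
  rw [eveWinsFrom_iff] at hp ⊢
  intro β' hβ' B0 B1 hB0 hB1
  obtain ⟨q, ⟨hltq, hA0q, hA1q, hgq, hresq, hh0q, hh1q⟩, hq⟩ := hp β' (hht ▸ hβ') B0 B1 hB0 hB1
  refine ⟨q, ⟨hht ▸ hltq, hA0 ▸ hA0q, hA1 ▸ hA1q, hg ▸ hgq, ?_, ?_, ?_⟩, hq⟩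
  · intro a b hab ha
    exact hg ▸ hresq a b hab (hA0 ▸ ha)
  · intro a ha
    rw [hA0] at ha
    exact hh0 a ha ▸ hh0q a ha
  · intro b hb
    rw [hA1] at hb
    exact hh1 b hb ▸ hh1q b hb

theorem eq_empty_of_eveWinsFrom_zero {p : Position L M N θ 0} (hp : EveWinsFrom L θ 0 p)
    (hht : 0 < p.ht) {s : Set N} (hs : #s ≤ θ) : s = ∅ := by
  obtain ⟨q, -, -, -, hsq, -⟩ := (eveWinsFrom_iff p).1 hp 0 hht ∅ s (by simp) hs
  exact Set.eq_empty_of_forall_notMem fun b hb => not_lt_zero (q.h1_lt b (hsq hb))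

end Game

section Composition

variable {M₀ M₁ M₂ : Type u} [L.Structure M₀] [L.Structure M₁] [L.Structure M₂]
  {θ : Cardinal.{u}} {α α' : Ordinal.{u}}

namespace Position

noncomputable def compH0 (p₁ : Position L M₀ M₁ θ α) (p₂ : Position L M₁ M₂ θ α') (a : M₀) :
    Ordinal.{u} :=
  p₁.h0 a ♯ partnerHeight p₁.g p₂.A0 p₂.h0 α' a

noncomputable def compH1 (p₁ : Position L M₀ M₁ θ α) (p₂ : Position L M₁ M₂ θ α') (c : M₂) :
    Ordinal.{u} :=
  partnerHeight (SetRel.inv p₂.g) p₁.A1 p₁.h1 α c ♯ p₂.h1 c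

noncomputable def comp (p₁ : Position L M₀ M₁ θ α) (p₂ : Position L M₁ M₂ θ α')
    (hp : p₁.A1 ⊆ p₂.A0) (hα : α = 0 → ∀ s : Set M₁, #s ≤ θ → s = ∅) :
    Position L M₀ M₂ θ (α ♯ α') where
  ht := p₁.ht
  A0 := p₁.A0
  A1 := p₂.A1
  A0_card := p₁.A0_card
  A1_card := p₂.A1_card
  g := p₁.g ○ p₂.g
  g_iso := p₁.g_iso.comp p₂.g_iso
  g_sub := by
    rintro ⟨a, c⟩ ⟨b, hab, hbc⟩
    exact ⟨(p₁.g_sub hab).1, (p₂.g_sub hbc).2⟩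
  h0 := compH0 p₁ p₂
  h1 := compH1 p₁ p₂
  h0_lt a ha := Ordinal.nadd_lt_nadd_of_lt_of_le (p₁.h0_lt a ha) (partnerHeight_le p₂.h0_lt)
  h1_lt c hc := Ordinal.nadd_lt_nadd_of_le_of_lt (partnerHeight_le p₁.h1_lt) (p₂.h1_lt c hc)
  h0_zero a ha h := by
    obtain ⟨ha₁, ha₂⟩ := Ordinal.nadd_eq_zero_iff.1 h
    obtain ⟨b, hab⟩ := p₁.h0_zero a ha ha₁
    have hα' : α' ≠ 0 := (pos_of_gt (p₂.h0_lt b (hp (p₁.g_sub hab).2))).ne'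
    obtain ⟨b, hb, hab, hb₀⟩ := exists_of_partnerHeight_eq_zero ha₂ hα'
    obtain ⟨c, hbc⟩ := p₂.h0_zero b hb hb₀
    exact ⟨c, b, hab, hbc⟩
  h1_zero c hc h := by
    obtain ⟨hc₁, hc₂⟩ := Ordinal.nadd_eq_zero_iff.1 h
    obtain ⟨b, hbc⟩ := p₂.h1_zero c hc hc₂
    have hα0 : α ≠ 0 := fun h0 => (hα h0 p₂.A0 p₂.A0_card).subset (p₂.g_sub hbc).1
    obtain ⟨b, hb, hbc, hb₀⟩ := exists_of_partnerHeight_eq_zero hc₁ hα0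
    obtain ⟨a, hab⟩ := p₁.h1_zero b hb hb₀
    exact ⟨a, b, hab, hbc⟩

variable {p₁ q₁ : Position L M₀ M₁ θ α} {p₂ q₂ : Position L M₁ M₂ θ α'}

theorem compH0_descends (E₁ : Extends L q₁ p₁) (E₂ : Extends L q₂ p₂) (hp : p₁.A1 ⊆ p₂.A0)
    {a : M₀} (ha : a ∈ p₁.A0) : Descends (compH0 q₁ q₂ a) (compH0 p₁ p₂ a) := by
  obtain ⟨-, -, -, hg₁, -, hh0₁, -⟩ := E₁
  obtain ⟨-, hA0₂, -, -, -, hh0₂, -⟩ := E₂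
  by_cases hm : ∃ b, (a, b) ∈ p₁.g
  · obtain ⟨b, hab⟩ := hm
    have hb : b ∈ p₂.A0 := hp (p₁.g_sub hab).2
    rw [compH0, compH0, partnerHeight_eq p₁.g_iso.1 hb hab,
      partnerHeight_eq q₁.g_iso.1 (hA0₂ hb) (hg₁ hab)]
    exact Descends.nadd (hh0₁ a ha) (hh0₂ b hb)
  · have hlt := (hh0₁ a ha).2 fun h => hm (p₁.h0_zero a ha h)
    have hnone : ¬∃ b ∈ p₂.A0, (a, b) ∈ p₁.g := fun ⟨b, _, hab⟩ => hm ⟨b, hab⟩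
    rw [compH0, compH0, partnerHeight_eq_default hnone]
    exact .of_lt (Ordinal.nadd_lt_nadd_of_lt_of_le hlt (partnerHeight_le q₂.h0_lt))

theorem compH1_descends (E₁ : Extends L q₁ p₁) (E₂ : Extends L q₂ p₂) (hcover : p₂.A0 ⊆ q₁.A1)
    {c : M₂} (hc : c ∈ p₂.A1) : Descends (compH1 q₁ q₂ c) (compH1 p₁ p₂ c) := by
  obtain ⟨-, -, -, -, -, -, hh1₁⟩ := E₁
  obtain ⟨-, -, -, hg, -, -, hh1⟩ := E₂
  by_cases hm : ∃ b, (b, c) ∈ p₂.g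
  · obtain ⟨b, hbc⟩ := hm
    have hb : b ∈ q₁.A1 := hcover (p₂.g_sub hbc).1
    rw [compH1, compH1, partnerHeight_eq (R := SetRel.inv q₂.g)
      (fun _ _ _ h h' => q₂.g_iso.2.1 h h') hb (hg hbc)]
    by_cases hb' : b ∈ p₁.A1
    · rw [partnerHeight_eq (R := SetRel.inv p₂.g)
        (fun _ _ _ h h' => p₂.g_iso.2.1 h h') hb' hbc]
      exact Descends.nadd (hh1₁ b hb') (hh1 c hc)
    · have hnone : ¬∃ b' ∈ p₁.A1, (c, b') ∈ SetRel.inv p₂.g :=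
        fun ⟨b', hb'', hbc'⟩ => hb' (p₂.g_iso.2.1 hbc' hbc ▸ hb'')
      rw [partnerHeight_eq_default hnone]
      exact .of_lt (Ordinal.nadd_lt_nadd_of_lt_of_le (q₁.h1_lt b hb) (hh1 c hc).1)
  · have hlt := (hh1 c hc).2 fun h => hm (p₂.h1_zero c hc h)
    have hnone : ¬∃ b ∈ p₁.A1, (c, b) ∈ SetRel.inv p₂.g := fun ⟨b, _, hbc⟩ => hm ⟨b, hbc⟩
    rw [compH1, compH1, partnerHeight_eq_default hnone]
    exact .of_lt (Ordinal.nadd_lt_nadd_of_le_of_lt (partnerHeight_le q₁.h1_lt) hlt)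

end Position

theorem Extends.comp {p₁ q₁ : Position L M₀ M₁ θ α} {p₂ q₂ : Position L M₁ M₂ θ α'}
    {hα : α = 0 → ∀ s : Set M₁, #s ≤ θ → s = ∅} (E₁ : Extends L q₁ p₁) (E₂ : Extends L q₂ p₂)
    (hp : p₁.A1 ⊆ p₂.A0) (hq : q₁.A1 ⊆ q₂.A0) (hcover : p₂.A0 ⊆ q₁.A1) :
    Extends L (q₁.comp q₂ hq hα) (p₁.comp p₂ hp hα) := by
  refine ⟨E₁.1, E₁.2.1, E₂.2.2.1, comp_subset_comp E₁.2.2.2.1 E₂.2.2.2.1, ?_,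
    fun a ha => Position.compH0_descends E₁ E₂ hp ha,
    fun c hc => Position.compH1_descends E₁ E₂ hcover hc⟩
  rintro a c ⟨b, hab, hbc⟩ ha
  have hab' := E₁.2.2.2.2.1 a b hab ha
  exact ⟨b, hab', E₂.2.2.2.2.1 b c hbc (hp (p₁.g_sub hab').2)⟩

theorem eveWinsFrom_comp (hα : α = 0 → ∀ s : Set M₁, #s ≤ θ → s = ∅)
    {p₁ : Position L M₀ M₁ θ α} {p₂ : Position L M₁ M₂ θ α'} (hp : p₁.A1 ⊆ p₂.A0)
    (hht : p₂.ht = p₁.ht) (W₁ : EveWinsFrom L θ α p₁) (W₂ : EveWinsFrom L θ α' p₂) :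
    EveWinsFrom L θ (α ♯ α') (p₁.comp p₂ hp hα) := by
  induction hβ : p₁.ht using WellFoundedLT.induction generalizing p₁ p₂ with
  | _ β IH =>
  rw [eveWinsFrom_iff] at W₁ W₂ ⊢
  intro β' hβ' B₀ B₂ hB₀ hB₂
  obtain ⟨q₁, E₁, hq₁, hB₀q, hcover, W₁'⟩ := W₁ β' hβ' B₀ p₂.A0 hB₀ p₂.A0_card
  obtain ⟨q₂, E₂, hq₂, hq, hB₂q, W₂'⟩ := W₂ β' (hht ▸ hβ') q₁.A1 B₂ q₁.A1_card hB₂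
  exact ⟨q₁.comp q₂ hq hα, E₁.comp E₂ hp hq hcover, hq₁, hB₀q, hB₂q,
    IH β' (hβ ▸ hβ') hq (hq₂.trans hq₁.symm) W₁' W₂' hq₁⟩

end Composition

end DGPaper

open DGPaper in
/-- Proposition `proposition:natural-sum`.  If Eve has winning
strategies in `DG^β_{θ,α}(M₀,M₁)` and `DG^β_{θ,α'}(M₁,M₂)`, then she has a winning
strategy in `DG^β_{θ,α⊕α'}(M₀,M₂)`, where `⊕` is the natural (Hessenberg) sum of
ordinals.  (The universes of the three structures are distinct types, hence pairwise
disjoint.) -/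
theorem eve_wins_natural_sum (L : FirstOrder.Language.{u, u})
    (M₀ M₁ M₂ : Type u) [L.Structure M₀] [L.Structure M₁] [L.Structure M₂]
    (θ : Cardinal.{u}) (α α' β : Ordinal.{u})
    (h01 : EveWinsGame L M₀ M₁ β θ α)
    (h12 : EveWinsGame L M₁ M₂ β θ α') :
    EveWinsGame L M₀ M₂ β θ (Ordinal.nadd α α') := by
  rcases eq_zero_or_pos β with rfl | hβ
  · exact eveWinsFrom_of_ht_eq_zero rfl
  have hα : α = 0 → ∀ s : Set M₁, #s ≤ θ → s = ∅ := by
    rintro rfl s hs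
    exact eq_empty_of_eveWinsFrom_zero h01 hβ hs
  refine eveWinsFrom_congr (eveWinsFrom_comp hα Set.Subset.rfl rfl h01 h12) rfl rfl rfl ?_
    (fun _ h => h.elim) (fun _ h => h.elim)
  exact (SetRel.empty_comp _).symm
end

section
/- Fix a cardinal θ, an ordinal γ, and a structure M in a vocabulary of size ≤ θ. For θ-sequences ā, b̄ of elements of M, write ā ∼_γ b̄ if there is f ∈ ℐ^γ_θ(M,M) with f(a_i) = b_i for all i < θ. Then ∼_γ is an equivalence relation on M^θ, and the number of equivalence classes of ∼_β is at most ℶ_{β+1}(θ). -/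
/-!
Inverses and composites of members of `ℐ^γ` are again in `ℐ^γ`, and diagonals of small sets
are in every `ℐ^γ`; this makes `∼_γ` an equivalence relation.

For the count, the `∼_β`-class of `ā` is determined by the first-order type of `ā` together with,
for each `γ < β`, the set of `∼_γ`-classes of the extensions `ā ⌢ c̄`. Indeed, equal types make
`ā ↦ b̄` a partial isomorphism, and equal sets of extension classes let every extension on one side
be matched on the other by a member of `ℐ^γ`, which is the back-and-forth condition. There are at most
`2 ^ θ` possible types and, by induction, at most `2 ^ ℶ_{γ+1}(θ) ≤ 2 ^ ℶ_β(θ)` possible sets of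
classes for each of the `|β| ≤ ℶ_β(θ)` ordinals `γ < β`, hence at most `2 ^ ℶ_β(θ) = ℶ_{β+1}(θ)`
classes.
-/

open Cardinal Set FirstOrder FirstOrder.Language

universe u

namespace DGPaper

variable (L : FirstOrder.Language.{u, u})

/-- The Karp back-and-forth hierarchy `ℐ^γ_θ(M, N)` of families of partial isomorphisms:
`ℐ⁰` consists of all partial isomorphisms of size `≤ θ`, and `f ∈ ℐ^γ` iff `f` is a
partial isomorphism of size `≤ θ` such that for all `γ' < γ`, every set of size `≤ θ` on
either side can be covered by some extension of `f` lying in `ℐ^{γ'}`. -/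
noncomputable def BF (M N : Type u) [L.Structure M] [L.Structure N] (θ : Cardinal.{u}) :
    Ordinal.{u} → Set (Set (M × N)) :=
  WellFounded.fix (C := fun _ : Ordinal.{u} => Set (Set (M × N))) Ordinal.lt_wf
    fun γ IH =>
      {g | IsPartialIso L M N g ∧ #g ≤ θ ∧
        ∀ γ' (h : γ' < γ),
          (∀ A : Set M, #A ≤ θ →
            ∃ g', g' ∈ IH γ' h ∧ g ⊆ g' ∧ A ⊆ Prod.fst '' g') ∧
          (∀ B : Set N, #B ≤ θ →
            ∃ g', g' ∈ IH γ' h ∧ g ⊆ g' ∧ B ⊆ Prod.snd '' g')}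

/-- `M ≡^γ_θ N`: the structures `M` and `N` are `θ`-back-and-forth equivalent up to `γ`,
i.e. `ℐ^γ_θ(M, N)` is nonempty. -/
noncomputable def BFEquiv (M N : Type u) [L.Structure M] [L.Structure N]
    (θ : Cardinal.{u}) (γ : Ordinal.{u}) : Prop :=
  (BF L M N θ γ).Nonempty

/-- The beth function starting at `θ`: `ℶ_0(θ) = θ`, `ℶ_{ξ+1}(θ) = 2^{ℶ_ξ(θ)}`, and
suprema at limits. -/
noncomputable def bethAt (θ : Cardinal.{u}) (o : Ordinal.{u}) : Cardinal.{u} :=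
  Ordinal.limitRecOn o θ (fun _ ih => 2 ^ ih) (fun o _ ih => ⨆ i : Set.Iio o, ih i.1 i.2)

end DGPaper

open DGPaper in
/-- The relation `ā ∼_γ b̄` between `θ`-sequences of elements of `M`:  some member of
`ℐ^γ_θ(M, M)` matches `a i` with `b i` for every `i < θ`. -/
noncomputable def simRel (L : FirstOrder.Language.{u, u}) (M : Type u) [L.Structure M]
    (θ : Cardinal.{u}) (γ : Ordinal.{u})
    (a b : θ.ord.ToType → M) : Prop :=
  ∃ g ∈ DGPaper.BF L M M θ γ, ∀ i, (a i, b i) ∈ g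

open scoped SetRel

namespace DGPaper

variable {L : FirstOrder.Language.{u, u}} {M N P : Type u}
  [L.Structure M] [L.Structure N] [L.Structure P] {θ : Cardinal.{u}}

theorem IsPartialIso.inv {g : SetRel M N} (hg : IsPartialIso L M N g) :
    IsPartialIso L N M g.inv := by
  obtain ⟨hfun, hinj, hrel, hfn⟩ := hg
  exact ⟨fun _ _ _ hb hb' => hinj hb hb', fun _ _ _ ha ha' => hfun ha ha',
    fun n R x y hxy => (hrel n R y x hxy).symm, fun n f x y hxy => (hfn n f y x hxy).symm⟩

theorem IsPartialIso.comp_s13 {f : SetRel M N} {g : SetRel N P} (hf : IsPartialIso L M N f)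
    (hg : IsPartialIso L N P g) : IsPartialIso L M P (f ○ g) := by
  obtain ⟨ffun, finj, frel, ffn⟩ := hf
  obtain ⟨gfun, ginj, grel, gfn⟩ := hg
  refine ⟨?_, ?_, fun n R x z hxz => ?_, fun n F x z hxz => ?_⟩
  · rintro a b b' ⟨m, ham, hmb⟩ ⟨m', ham', hmb'⟩
    obtain rfl := ffun ham ham'
    exact gfun hmb hmb'
  · rintro a a' b ⟨m, ham, hmb⟩ ⟨m', ham', hmb'⟩
    obtain rfl := ginj hmb hmb'
    exact finj ham ham'
  · choose y hxy hyz using hxz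
    exact (frel n R x y hxy).trans (grel n R y z hyz)
  · choose y hxy hyz using hxz
    obtain ⟨hf₁, hf₂⟩ := ffn n F x y hxy
    obtain ⟨hg₁, hg₂⟩ := gfn n F y z hyz
    refine ⟨fun c ⟨m, hm, hmc⟩ => ?_, fun a ⟨m, ham, hm⟩ => ?_⟩
    · obtain rfl := hf₁ m hm
      exact hg₁ c hmc
    · obtain rfl := hg₂ m hm
      exact hf₂ a ham

theorem isPartialIso_range_of_realize_iff {ι : Type*} {a : ι → M} {b : ι → N}
    (h : ∀ φ : L.Formula ι, φ.Realize a ↔ φ.Realize b) :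
    IsPartialIso L M N (range fun i => (a i, b i)) := by
  have hterm (t₁ t₂ : L.Term ι) : t₁.realize a = t₂.realize a ↔ t₁.realize b = t₂.realize b := by
    simpa using h (t₁.equal t₂)
  have hseq {n : ℕ} {x : Fin n → M} {y : Fin n → N}
      (hxy : ∀ k, (x k, y k) ∈ range fun i => (a i, b i)) :
      ∃ σ : Fin n → ι, x = a ∘ σ ∧ y = b ∘ σ := by
    choose σ hσ using hxy
    exact ⟨σ, funext fun k => (congrArg Prod.fst (hσ k)).symm,
      funext fun k => (congrArg Prod.snd (hσ k)).symm⟩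
  refine ⟨?_, ?_, fun n R x y hxy => ?_, fun n F x y hxy => ?_⟩
  · rintro _ _ _ ⟨i, hi⟩ ⟨j, hj⟩
    simp only [Prod.mk.injEq] at hi hj
    rw [← hi.2, ← hj.2]
    exact (hterm (.var i) (.var j)).1 (hi.1.trans hj.1.symm)
  · rintro _ _ _ ⟨i, hi⟩ ⟨j, hj⟩
    simp only [Prod.mk.injEq] at hi hj
    rw [← hi.1, ← hj.1]
    exact (hterm (.var i) (.var j)).2 (hi.2.trans hj.2.symm)
  · obtain ⟨σ, rfl, rfl⟩ := hseq hxy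
    simpa [Function.comp_def] using h (R.formula fun k => .var (σ k))
  · obtain ⟨σ, rfl, rfl⟩ := hseq hxy
    have hF (j : ι) := hterm (.func F fun k => .var (σ k)) (.var j)
    simp only [Term.realize_func, Term.realize_var] at hF
    refine ⟨?_, ?_⟩
    · rintro _ ⟨j, hj⟩
      simp only [Prod.mk.injEq] at hj
      rw [← hj.2]
      exact ((hF j).1 hj.1.symm).symm
    · rintro _ ⟨j, hj⟩
      simp only [Prod.mk.injEq] at hj
      rw [← hj.1]
      exact ((hF j).2 hj.2.symm).symm

theorem mk_comp_le_of_functional {f : SetRel M N} {g : SetRel N P}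
    (hg : ∀ ⦃b : N⦄ ⦃c c' : P⦄, (b, c) ∈ g → (b, c') ∈ g → c = c') : #(f ○ g) ≤ #f := by
  choose m hfm hmg using fun p : ↥(f ○ g) => p.2
  refine mk_le_of_injective (f := fun p => ⟨(p.1.1, m p), hfm p⟩) fun p q hpq => ?_
  simp only [Subtype.mk.injEq, Prod.mk.injEq] at hpq
  exact Subtype.ext (Prod.ext hpq.1 (hg (hmg p) (hpq.2 ▸ hmg q)))

theorem image_fst_inv (g : SetRel M N) : Prod.fst '' g.inv = Prod.snd '' g := by
  rw [SetRel.inv, ← image_swap_eq_preimage_swap, image_image]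
  rfl

theorem image_snd_inv (g : SetRel M N) : Prod.snd '' g.inv = Prod.fst '' g :=
  (image_fst_inv g.inv).symm

theorem mem_BF_iff {γ : Ordinal.{u}} {g : SetRel M N} :
    g ∈ BF L M N θ γ ↔ IsPartialIso L M N g ∧ #g ≤ θ ∧
      ∀ γ' < γ,
        (∀ A : Set M, #A ≤ θ → ∃ g' ∈ BF L M N θ γ', g ⊆ g' ∧ A ⊆ Prod.fst '' g') ∧
        (∀ B : Set N, #B ≤ θ → ∃ g' ∈ BF L M N θ γ', g ⊆ g' ∧ B ⊆ Prod.snd '' g') := by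
  rw [BF, WellFounded.fix_eq]
  rfl

theorem diag_mem_BF (hθ : ℵ₀ ≤ θ) (γ : Ordinal.{u}) {S : Set M} (hS : #S ≤ θ) :
    (fun x => (x, x)) '' S ∈ BF L M M θ γ := by
  induction γ using WellFoundedLT.induction generalizing S with
  | ind γ IH =>
  have hiso : IsPartialIso L M M ((fun x => (x, x)) '' S) := by
    rw [image_eq_range]
    exact isPartialIso_range_of_realize_iff fun _ => Iff.rfl
  refine mem_BF_iff.2 ⟨hiso, mk_image_le.trans hS, fun γ' hγ' => ?_⟩
  have hSA (A : Set M) (hA : #A ≤ θ) : (fun x => (x, x)) '' (S ∪ A) ∈ BF L M M θ γ' :=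
    IH γ' hγ' ((mk_union_le S A).trans ((add_le_add hS hA).trans (add_eq_self hθ).le))
  have hsub (A : Set M) : (fun x => (x, x)) '' S ⊆ (fun x => (x, x)) '' (S ∪ A) :=
    image_mono subset_union_left
  exact ⟨fun A hA => ⟨_, hSA A hA, hsub A, by simp [image_image]⟩,
    fun A hA => ⟨_, hSA A hA, hsub A, by simp [image_image]⟩⟩

theorem inv_mem_BF {γ : Ordinal.{u}} {g : SetRel M N} (hg : g ∈ BF L M N θ γ) :
    g.inv ∈ BF L N M θ γ := by
  induction γ using WellFoundedLT.induction generalizing g with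
  | ind γ IH =>
  obtain ⟨hiso, hcard, hext⟩ := mem_BF_iff.1 hg
  refine mem_BF_iff.2 ⟨hiso.inv,
    (mk_preimage_of_injective _ _ Prod.swap_injective).trans hcard, fun γ' hγ' => ?_⟩
  obtain ⟨forth, back⟩ := hext γ' hγ'
  refine ⟨fun B hB => ?_, fun A hA => ?_⟩
  · obtain ⟨g', hg', hgg', hB'⟩ := back B hB
    exact ⟨SetRel.inv g', IH γ' hγ' hg', SetRel.inv_mono hgg', by rwa [image_fst_inv]⟩
  · obtain ⟨g', hg', hgg', hA'⟩ := forth A hA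
    refine ⟨SetRel.inv g', IH γ' hγ' hg', SetRel.inv_mono hgg', ?_⟩
    rwa [image_snd_inv]

theorem comp_mem_BF {γ : Ordinal.{u}} {f : SetRel M N} {g : SetRel N P}
    (hf : f ∈ BF L M N θ γ) (hg : g ∈ BF L N P θ γ) : f ○ g ∈ BF L M P θ γ := by
  induction γ using WellFoundedLT.induction generalizing f g with
  | ind γ IH =>
  obtain ⟨hfiso, hfcard, hfext⟩ := mem_BF_iff.1 hf
  obtain ⟨hgiso, -, hgext⟩ := mem_BF_iff.1 hg
  refine mem_BF_iff.2 ⟨hfiso.comp_s13 hgiso, (mk_comp_le_of_functional hgiso.1).trans hfcard,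
    fun γ' hγ' => ⟨fun A hA => ?_, fun C hC => ?_⟩⟩
  · -- extend `f` over `A`, then `g` over the new range of `f`
    obtain ⟨f', hf', hff', hA'⟩ := (hfext γ' hγ').1 A hA
    obtain ⟨g', hg', hgg', hf'g'⟩ := (hgext γ' hγ').1 (Prod.snd '' f')
      (mk_image_le.trans (mem_BF_iff.1 hf').2.1)
    refine ⟨f' ○ g', IH γ' hγ' hf' hg', SetRel.comp_subset_comp hff' hgg', ?_⟩
    rintro _ ha
    obtain ⟨⟨a, m⟩, ham, rfl⟩ := hA' ha
    obtain ⟨⟨m', c⟩, hmc, rfl : m' = m⟩ := hf'g' ⟨_, ham, rfl⟩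
    exact ⟨(a, c), ⟨m', ham, hmc⟩, rfl⟩
  · obtain ⟨g', hg', hgg', hC'⟩ := (hgext γ' hγ').2 C hC
    obtain ⟨f', hf', hff', hg'f'⟩ := (hfext γ' hγ').2 (Prod.fst '' g')
      (mk_image_le.trans (mem_BF_iff.1 hg').2.1)
    refine ⟨f' ○ g', IH γ' hγ' hf' hg', SetRel.comp_subset_comp hff' hgg', ?_⟩
    rintro _ hc
    obtain ⟨⟨m, c⟩, hmc, rfl⟩ := hC' hc
    obtain ⟨⟨a, m'⟩, ham, rfl : m' = m⟩ := hg'f' ⟨_, hmc, rfl⟩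
    exact ⟨(a, c), ⟨m', ham, hmc⟩, rfl⟩

theorem simRel_equivalence (hθ : ℵ₀ ≤ θ) (γ : Ordinal.{u}) : Equivalence (simRel L M θ γ) where
  refl _ := ⟨_, diag_mem_BF hθ γ (mk_range_le.trans (mk_ord_toType θ).le),
    fun i => mem_image_of_mem _ (mem_range_self i)⟩
  symm := fun ⟨g, hg, hab⟩ => ⟨SetRel.inv g, inv_mem_BF hg, hab⟩
  trans := fun ⟨f, hf, hab⟩ ⟨g, hg, hbc⟩ => ⟨f ○ g, comp_mem_BF hf hg, fun i => ⟨_, hab i, hbc i⟩⟩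

theorem bethAt_zero : bethAt θ 0 = θ :=
  Ordinal.limitRecOn_zero _ _ _

theorem bethAt_succ (o : Ordinal.{u}) : bethAt θ (o + 1) = 2 ^ bethAt θ o := by
  rw [bethAt, Ordinal.limitRecOn_add_one]
  rfl

theorem bethAt_limit {o : Ordinal.{u}} (ho : Order.IsSuccLimit o) :
    bethAt θ o = ⨆ i : Iio o, bethAt θ i := by
  rw [bethAt, Ordinal.limitRecOn_limit _ _ _ _ ho]
  rfl

theorem bethAt_strictMono : StrictMono (bethAt θ) := by
  intro o₁ o₂ h
  induction o₂ using WellFoundedLT.induction generalizing o₁ with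
  | ind o₂ IH =>
  rcases Ordinal.zero_or_succ_or_isSuccLimit o₂ with rfl | ⟨δ, rfl⟩ | ho
  · exact absurd h (not_lt_zero (a := o₁))
  · rw [Order.succ_eq_add_one, bethAt_succ]
    refine lt_of_le_of_lt ?_ (cantor _)
    rcases (Order.lt_succ_iff.1 h).eq_or_lt with rfl | hδ
    · exact le_rfl
    · exact (IH δ (Order.lt_succ δ) hδ).le
  · rw [bethAt_limit ho]
    calc bethAt θ o₁ < 2 ^ bethAt θ o₁ := cantor _
      _ = bethAt θ (o₁ + 1) := (bethAt_succ o₁).symm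
      _ ≤ ⨆ i : Iio o₂, bethAt θ i :=
        le_ciSup bddAbove_of_small (⟨o₁ + 1, ho.add_one_lt h⟩ : Iio o₂)

theorem le_bethAt (o : Ordinal.{u}) : θ ≤ bethAt θ o :=
  bethAt_zero.symm.le.trans (bethAt_strictMono.monotone zero_le)

theorem card_le_bethAt (o : Ordinal.{u}) : o.card ≤ bethAt θ o := by
  have hord : StrictMono fun o => (bethAt θ o).ord := fun _ _ h =>
    ord_lt_ord.2 (bethAt_strictMono h)
  simpa using Ordinal.card_le_card hord.le_apply

theorem mk_formula_le {α : Type u} (hθ : ℵ₀ ≤ θ) (hα : #α ≤ θ) (hL : L.card ≤ θ) :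
    #(L.Formula α) ≤ θ :=
  calc #(L.Formula α) ≤ #(Σ n, L.BoundedFormula α n) :=
        mk_le_of_injective (f := Sigma.mk 0) sigma_mk_injective
    _ ≤ max ℵ₀ (lift #α + lift L.card) := BoundedFormula.card_le
    _ ≤ θ := max_le hθ (by simpa using (add_le_add hα hL).trans (add_eq_self hθ).le)

theorem prod_two_power_le {ι : Type u} {c : ι → Cardinal.{u}} {κ : Cardinal.{u}} (hκ : ℵ₀ ≤ κ)
    (hι : #ι ≤ κ) (hc : ∀ i, c i ≤ κ) : prod (fun i => (2 : Cardinal) ^ c i) ≤ 2 ^ κ :=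
  calc prod (fun i => (2 : Cardinal) ^ c i) ≤ prod fun _ : ι => (2 : Cardinal) ^ κ :=
        prod_le_prod _ _ fun i => power_le_power_left two_ne_zero (hc i)
    _ = 2 ^ (κ * #ι) := by rw [prod_const', power_mul]
    _ ≤ 2 ^ (κ * κ) := power_le_power_left two_ne_zero (mul_le_mul_right hι κ)
    _ = 2 ^ κ := by rw [mul_eq_self hκ]

/-- `Sum.elim a c ∘ e.symm` is the concatenation `a ⌢ c`, re-indexed by `θ` through `e`. -/
def extensionClasses (e : θ.ord.ToType ⊕ θ.ord.ToType ≃ θ.ord.ToType) (γ : Ordinal.{u})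
    (a : θ.ord.ToType → M) : Set (Quot (simRel L M θ γ)) :=
  range fun c => Quot.mk _ (Sum.elim a c ∘ e.symm)

theorem exists_BF_cover_of_extensionClasses_subset (hθ : ℵ₀ ≤ θ)
    {e : θ.ord.ToType ⊕ θ.ord.ToType ≃ θ.ord.ToType} {γ : Ordinal.{u}} {a b : θ.ord.ToType → M}
    (hab : extensionClasses (L := L) e γ a ⊆ extensionClasses e γ b) {A : Set M} (hA : #A ≤ θ) :
    ∃ g ∈ BF L M M θ γ, range (fun i => (a i, b i)) ⊆ g ∧ A ⊆ Prod.fst '' g := by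
  obtain ⟨f⟩ := le_def A θ.ord.ToType |>.1 (hA.trans_eq (mk_ord_toType θ).symm)
  set c : θ.ord.ToType → M := Function.extend f Subtype.val a
  have hAc : A ⊆ range c := fun x hx => ⟨f ⟨x, hx⟩, f.injective.extend_apply _ _ _⟩
  obtain ⟨d, hd⟩ := hab ⟨c, rfl⟩
  have hsim := (simRel_equivalence hθ γ).eqvGen_iff.1 (Quot.eqvGen_exact hd)
  obtain ⟨g, hg, hmatch⟩ := (simRel_equivalence hθ γ).symm hsim
  refine ⟨g, hg, ?_, fun x hx => ?_⟩
  · rintro _ ⟨i, rfl⟩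
    simpa using hmatch (e (.inl i))
  · obtain ⟨i, rfl⟩ := hAc hx
    exact ⟨_, hmatch (e (.inr i)), by simp⟩

theorem simRel_of_realize_iff_of_extensionClasses_eq (hθ : ℵ₀ ≤ θ)
    (e : θ.ord.ToType ⊕ θ.ord.ToType ≃ θ.ord.ToType) {β : Ordinal.{u}} {a b : θ.ord.ToType → M}
    (hφ : ∀ φ : L.Formula θ.ord.ToType, φ.Realize a ↔ φ.Realize b)
    (hext : ∀ γ < β, extensionClasses (L := L) e γ a = extensionClasses e γ b) :
    simRel L M θ β a b := by
  refine ⟨_, mem_BF_iff.2 ⟨isPartialIso_range_of_realize_iff hφ,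
    mk_range_le.trans (mk_ord_toType θ).le, fun γ hγ => ⟨fun A hA => ?_, fun B hB => ?_⟩⟩,
    mem_range_self⟩
  · exact exists_BF_cover_of_extensionClasses_subset hθ (hext γ hγ).le hA
  · obtain ⟨g, hg, hba, hB'⟩ := exists_BF_cover_of_extensionClasses_subset hθ (hext γ hγ).ge hB
    refine ⟨SetRel.inv g, inv_mem_BF hg, ?_, by rwa [image_snd_inv]⟩
    rintro _ ⟨i, rfl⟩
    exact hba ⟨i, rfl⟩

theorem exists_sum_equiv_ord_toType (hθ : ℵ₀ ≤ θ) :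
    Nonempty (θ.ord.ToType ⊕ θ.ord.ToType ≃ θ.ord.ToType) := by
  rw [← Cardinal.eq, mk_sum, lift_id, mk_ord_toType, add_eq_self hθ]

theorem mk_quot_simRel_le (hθ : ℵ₀ ≤ θ) (hL : L.card ≤ θ) (β : Ordinal.{u}) :
    #(Quot (simRel L M θ β)) ≤ bethAt θ (β + 1) := by
  obtain ⟨e⟩ := exists_sum_equiv_ord_toType hθ
  induction β using WellFoundedLT.induction with
  | ind β IH =>
  let γ (i : β.ToType) : Ordinal.{u} := (Ordinal.ToType.toOrd i).1
  let invariant (q : Quot (simRel L M θ β)) :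
      Set (L.Formula θ.ord.ToType) × ((i : β.ToType) → Set (Quot (simRel L M θ (γ i)))) :=
    ({φ | φ.Realize q.out}, fun i => extensionClasses e (γ i) q.out)
  have hinj : Function.Injective invariant := by
    intro q q' h
    obtain ⟨htype, hext⟩ := Prod.mk.inj h
    rw [← Quot.out_eq q, ← Quot.out_eq q']
    refine Quot.sound (simRel_of_realize_iff_of_extensionClasses_eq hθ e
      (fun φ => Set.ext_iff.1 htype φ) fun γ' hγ' => ?_)
    obtain ⟨i, rfl⟩ : ∃ i, γ i = γ' := ⟨Ordinal.ToType.mk ⟨γ', hγ'⟩, by simp [γ]⟩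
    exact congr_fun hext i
  have hκ : ℵ₀ ≤ bethAt θ β := hθ.trans (le_bethAt β)
  have hclasses (i : β.ToType) : #(Quot (simRel L M θ (γ i))) ≤ bethAt θ β :=
    (IH _ (Ordinal.ToType.toOrd i).2).trans
      (bethAt_strictMono.monotone (Order.add_one_le_of_lt (Ordinal.ToType.toOrd i).2))
  calc #(Quot (simRel L M θ β))
      ≤ 2 ^ #(L.Formula θ.ord.ToType) * prod fun i => 2 ^ #(Quot (simRel L M θ (γ i))) := by
        simpa [mk_prod, mk_pi] using mk_le_of_injective hinj
    _ ≤ 2 ^ bethAt θ β * 2 ^ bethAt θ β := by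
        refine mul_le_mul' (power_le_power_left two_ne_zero ?_) ?_
        · exact (mk_formula_le hθ (mk_ord_toType θ).le hL).trans (le_bethAt β)
        · exact prod_two_power_le hκ ((mk_toType β).trans_le (card_le_bethAt β)) hclasses
    _ = bethAt θ (β + 1) := by
        rw [mul_eq_self (hκ.trans (cantor _).le), bethAt_succ]

end DGPaper

open DGPaper in
/-- For a structure `M` in a vocabulary of size `≤ θ`, the relation
`∼_γ` is an equivalence relation on `θ`-sequences of elements of `M`, and the number of
`∼_β`-equivalence classes is at most `ℶ_{β+1}(θ)`. -/
theorem simRel_equivalence_and_count (L : FirstOrder.Language.{u, u})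
    (M : Type u) [L.Structure M]
    (θ : Cardinal.{u}) (hθ : Cardinal.aleph0 ≤ θ) (hL : L.card ≤ θ)
    (γ β : Ordinal.{u}) :
    Equivalence (simRel L M θ γ) ∧
      #(Quot (simRel L M θ β)) ≤ bethAt θ (β + 1) :=
  ⟨simRel_equivalence hθ γ, mk_quot_simRel_le hθ hL β⟩
end
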